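/- Let G be a b-monotone graph containing no induced K_4 minus an edge and no induced C_4. Then ⌊Γ(G)/2⌋ ≤ b(G). -/

import Mathlib

open SimpleGraph

/-- A proper coloring by natural number colors. -/
def IsProperNat {V : Type*} (G : SimpleGraph V) (c : V → ℕ) : Prop :=
  ∀ ⦃v w⦄, G.Adj v w → c v ≠ c w

/-- A Grundy coloring of `G` with colors `1, …, k`: proper, every color used, and
every vertex of color `j` has a neighbor of each color `i < j`. -/
def IsGrundyColoring {V : Type*} (G : SimpleGraph V) (k : ℕ) (c : V → ℕ) : Prop :=
  (∀ v, c v ∈ Finset.Icc 1 k) ∧ IsProperNat G c ∧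
  (∀ i ∈ Finset.Icc 1 k, ∃ v, c v = i) ∧
  (∀ v, ∀ i, 1 ≤ i → i < c v → ∃ w, G.Adj v w ∧ c w = i)

/-- The Grundy number: the maximum number of colors in a Grundy coloring. -/
noncomputable def grundyNumber {V : Type*} (G : SimpleGraph V) : ℕ :=
  sSup {k | ∃ c : V → ℕ, IsGrundyColoring G k c}

/-- A color-dominating (b-)coloring with colors `1, …, k`: proper, and each color class
contains a vertex having neighbors in all the other color classes. -/
def IsBColoring {V : Type*} (G : SimpleGraph V) (k : ℕ) (c : V → ℕ) : Prop :=
  (∀ v, c v ∈ Finset.Icc 1 k) ∧ IsProperNat G c ∧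
  (∀ i ∈ Finset.Icc 1 k, ∃ v, c v = i ∧
    ∀ j ∈ Finset.Icc 1 k, j ≠ i → ∃ w, G.Adj v w ∧ c w = j)

/-- The b-chromatic number: the maximum number of colors in a b-coloring. -/
noncomputable def bChromatic {V : Type*} (G : SimpleGraph V) : ℕ :=
  sSup {k | ∃ c : V → ℕ, IsBColoring G k c}

/-- `m(G) = max {k : d_k ≥ k - 1}` for the non-increasing degree sequence; equivalently
the largest `k` such that `G` has `k` vertices of degree at least `k - 1`. -/
noncomputable def mParam {V : Type*} (G : SimpleGraph V) : ℕ :=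
  sSup {k | ∃ s : Finset V, s.card = k ∧ ∀ v ∈ s, k - 1 ≤ (G.neighborSet v).ncard}

/-- A graph is b-monotone if the b-chromatic number of every induced subgraph is at most
that of the graph itself. -/
def BMonotone {V : Type*} (G : SimpleGraph V) : Prop :=
  ∀ s : Set V, bChromatic (G.induce s) ≤ bChromatic G

/-- `K₄` minus one edge. -/
def K4minusE : SimpleGraph (Fin 4) := (completeGraph (Fin 4)).deleteEdges {s(0, 1)}

/-- The cycle on four vertices. -/
def C4 : SimpleGraph (ZMod 4) := SimpleGraph.fromRel (fun i j => j = i + 1)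

/-! Take a Grundy colouring with `k` colours, a vertex `v` of colour `k`, and put `t = ⌊k/2⌋`,
`n = k - t`. The neighbours `u m` of `v` of colour `n + m` (`1 ≤ m < t`) are recoloured `m` and `v`
is recoloured `t`. Whenever `u j` and `u m` are not adjacent, add a neighbour `w m j` of `u m` of
colour `j`, which keeps its colour. In a `(K₄ - e, C₄)`-free graph two nonadjacent vertices have at
most one common neighbour; as `v` is a common neighbour of `u j` and `u m`, the vertex `w m j ≠ v`
is not adjacent to `u j`. So the new colouring is proper, and it is a b-colouring with `t` colours
of the subgraph induced on these vertices. b-monotonicity transfers the bound to `G`. -/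

section Coloring

variable {V : Type*} {G : SimpleGraph V}

namespace SimpleGraph

theorem nonempty_K4minusE_embedding {a b x y : V} (hab : a ≠ b) (hnab : ¬G.Adj a b)
    (hax : G.Adj a x) (hay : G.Adj a y) (hbx : G.Adj b x) (hby : G.Adj b y) (hxy : G.Adj x y) :
    Nonempty (K4minusE ↪g G) := by
  refine ⟨⟨⟨![a, b, x, y], fun p q hpq => ?_⟩, fun {p q} => ?_⟩⟩
  · fin_cases p <;> fin_cases q <;> simp_all
  · change G.Adj (![a, b, x, y] p) (![a, b, x, y] q) ↔ _
    fin_cases p <;> fin_cases q <;> simp_all [K4minusE, G.adj_comm]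

theorem nonempty_C4_embedding {a b x y : V} (hab : a ≠ b) (hxy : x ≠ y) (hnab : ¬G.Adj a b)
    (hnxy : ¬G.Adj x y) (hax : G.Adj a x) (hay : G.Adj a y) (hbx : G.Adj b x) (hby : G.Adj b y) :
    Nonempty (C4 ↪g G) := by
  -- `ZMod 4` is `Fin 4` by definition; over `Fin 4`, `fin_cases` and `simp` evaluate the numerals.
  change Nonempty (fromRel (fun i j : Fin 4 => j = i + 1) ↪g G)
  refine ⟨⟨⟨![a, x, b, y], fun p q hpq => ?_⟩, fun {p q} => ?_⟩⟩
  · fin_cases p <;> fin_cases q <;> simp_all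
  · change G.Adj (![a, x, b, y] p) (![a, x, b, y] q) ↔ _
    fin_cases p <;> fin_cases q <;> simp_all [G.adj_comm]

theorem commonNeighbors_subsingleton (h1 : IsEmpty (K4minusE ↪g G)) (h2 : IsEmpty (C4 ↪g G))
    {a b : V} (hab : a ≠ b) (hnab : ¬G.Adj a b) : (G.commonNeighbors a b).Subsingleton := by
  intro x hx y hy
  rw [mem_commonNeighbors] at hx hy
  by_contra hxy
  by_cases hadj : G.Adj x y
  · exact (nonempty_K4minusE_embedding hab hnab hx.1 hy.1 hx.2 hy.2 hadj).elim h1.false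
  · exact (nonempty_C4_embedding hab hxy hnab hadj hx.1 hy.1 hx.2 hy.2).elim h2.false

end SimpleGraph

theorem le_natCard_of_forall_exists_eq [Finite V] {k : ℕ} {c : V → ℕ}
    (h : ∀ i ∈ Finset.Icc 1 k, ∃ v, c v = i) : k ≤ Nat.card V :=
  calc k = (Set.Icc 1 k).ncard := by simp
    _ ≤ (Set.range c).ncard := Set.ncard_le_ncard fun i hi => h i (by simpa using hi)
    _ ≤ Nat.card V := by rw [← Nat.card_coe_set_eq]; exact Finite.card_range_le c

theorem le_bChromatic [Finite V] {k : ℕ} {c : V → ℕ} (h : IsBColoring G k c) :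
    k ≤ bChromatic G :=
  le_csSup ⟨Nat.card V, fun _ ⟨_, hc⟩ =>
    le_natCard_of_forall_exists_eq fun i hi => (hc.2.2 i hi).imp fun _ hv => hv.1⟩ ⟨c, h⟩

theorem exists_isGrundyColoring_grundyNumber [Finite V] (h : grundyNumber G ≠ 0) :
    ∃ c, IsGrundyColoring G (grundyNumber G) c := by
  have hbdd : BddAbove {k | ∃ c : V → ℕ, IsGrundyColoring G k c} :=
    ⟨Nat.card V, fun _ ⟨_, hc⟩ => le_natCard_of_forall_exists_eq hc.2.2.1⟩
  refine Nat.sSup_mem (Set.nonempty_iff_ne_empty.mpr fun hempty => h ?_) hbdd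
  rw [grundyNumber, hempty, csSup_empty]
  rfl

def foldColor (n a : ℕ) : ℕ := if n < a then a - n else a

theorem foldColor_add {n m : ℕ} (hm : 0 < m) : foldColor n (n + m) = m := by
  simp [foldColor, hm]

theorem foldColor_of_le {n a : ℕ} (h : a ≤ n) : foldColor n a = a := by
  simp [foldColor, h.not_gt]

theorem eq_of_foldColor_eq {n a b : ℕ} (hab : n < a ↔ n < b)
    (h : foldColor n a = foldColor n b) : a = b := by
  unfold foldColor at h
  split_ifs at h <;> omega

structure IsColorStar (G : SimpleGraph V) (c : V → ℕ) (n t : ℕ) (v : V) (u : ℕ → V)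
    (w : ℕ → ℕ → V) : Prop where
  center : c v = n + t
  leg : ∀ m ∈ Set.Ico 1 t, G.Adj v (u m) ∧ c (u m) = n + m
  foot : ∀ m ∈ Set.Ico 1 t, ∀ j ∈ Set.Ico 1 t, G.Adj (u m) (w m j) ∧ c (w m j) = j

-- `w m j` is only added when needed: if `u j` is adjacent to `u m`, adding it could break properness.
def starSet (G : SimpleGraph V) (v : V) (u : ℕ → V) (w : ℕ → ℕ → V) (t : ℕ) : Set V :=
  insert v (u '' Set.Ico 1 t ∪
    {x | ∃ m ∈ Set.Ico 1 t, ∃ j ∈ Set.Ico 1 t, j ≠ m ∧ ¬G.Adj (u j) (u m) ∧ w m j = x})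

namespace IsColorStar

variable {c : V → ℕ} {n t : ℕ} {v : V} {u : ℕ → V} {w : ℕ → ℕ → V}

theorem foldColor_mem_Icc (hS : IsColorStar G c n t v u w) (ht : 1 ≤ t) (htn : t ≤ n + 1)
    {x : V} (hx : x ∈ starSet G v u w t) : foldColor n (c x) ∈ Finset.Icc 1 t := by
  rw [Finset.mem_Icc]
  rcases hx with rfl | ⟨m, ⟨hm1, hm2⟩, rfl⟩ | ⟨m, hm, j, ⟨hj1, hj2⟩, -, -, rfl⟩
  · rw [hS.center, foldColor_add ht]
    omega
  · rw [(hS.leg m ⟨hm1, hm2⟩).2, foldColor_add hm1]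
    omega
  · rw [(hS.foot m hm j ⟨hj1, hj2⟩).2, foldColor_of_le (by omega)]
    omega

theorem not_adj_foot (hS : IsColorStar G c n t v u w)
    (hG : ∀ a b, a ≠ b → ¬G.Adj a b → (G.commonNeighbors a b).Subsingleton) {m j : ℕ}
    (hm : m ∈ Set.Ico 1 t) (hj : j ∈ Set.Ico 1 t) (hjm : j ≠ m) (hnadj : ¬G.Adj (u j) (u m)) :
    ¬G.Adj (u j) (w m j) := by
  intro hadj
  have hne : u j ≠ u m := fun h => hjm <| by
    have := congrArg c h
    rw [(hS.leg j hj).2, (hS.leg m hm).2] at this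
    omega
  have hvw : v = w m j := hG _ _ hne hnadj
    (G.mem_commonNeighbors.2 ⟨(hS.leg j hj).1.symm, (hS.leg m hm).1.symm⟩)
    (G.mem_commonNeighbors.2 ⟨hadj, (hS.foot m hm j hj).1⟩)
  have := congrArg c hvw
  rw [hS.center, (hS.foot m hm j hj).2] at this
  exact absurd hj.2 (by omega)

theorem foldColor_ne_of_adj (hS : IsColorStar G c n t v u w)
    (hG : ∀ a b, a ≠ b → ¬G.Adj a b → (G.commonNeighbors a b).Subsingleton)
    (hc : IsProperNat G c) (ht : 1 ≤ t) (htn : t ≤ n + 1) {x y : V}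
    (hx : x ∈ starSet G v u w t) (hy : y ∈ starSet G v u w t) (hxy : G.Adj x y) :
    foldColor n (c x) ≠ foldColor n (c y) := by
  have mixed : ∀ x ∈ starSet G v u w t, ∀ y ∈ starSet G v u w t, G.Adj x y → n < c x →
      c y ≤ n → foldColor n (c x) ≠ foldColor n (c y) := by
    intro x hx y hy hxy hxn hyn
    rcases hy with rfl | ⟨m, hm, rfl⟩ | ⟨m, hm, j, hj, hjm, hnadj, rfl⟩
    · rw [hS.center] at hyn
      omega
    · rw [(hS.leg m hm).2] at hyn
      exact absurd hm.1 (by omega)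
    rw [foldColor_of_le hyn, (hS.foot m hm j hj).2]
    rcases hx with rfl | ⟨l, hl, rfl⟩ | ⟨l, hl, i, hi, -, -, rfl⟩
    · rw [hS.center, foldColor_add ht]
      exact hj.2.ne'
    · rw [(hS.leg l hl).2, foldColor_add hl.1]
      rintro rfl
      exact hS.not_adj_foot hG hm hj hjm hnadj hxy
    · rw [(hS.foot l hl i hi).2] at hxn
      exact absurd hi.2 (by omega)
  by_cases hxn : n < c x <;> by_cases hyn : n < c y
  · exact fun h => hc hxy (eq_of_foldColor_eq (iff_of_true hxn hyn) h)
  · exact mixed x hx y hy hxy hxn (not_lt.1 hyn)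
  · exact fun h => mixed y hy x hx hxy.symm hyn (not_lt.1 hxn) h.symm
  · exact fun h => hc hxy (eq_of_foldColor_eq (iff_of_false hxn hyn) h)

theorem exists_dominating (hS : IsColorStar G c n t v u w) (ht : 1 ≤ t) (htn : t ≤ n + 1)
    {i : ℕ} (hi : i ∈ Finset.Icc 1 t) :
    ∃ x ∈ starSet G v u w t, foldColor n (c x) = i ∧ ∀ j ∈ Finset.Icc 1 t, j ≠ i →
      ∃ y ∈ starSet G v u w t, G.Adj x y ∧ foldColor n (c y) = j := by
  have fold_v : foldColor n (c v) = t := by rw [hS.center, foldColor_add ht]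
  have fold_u : ∀ m ∈ Set.Ico 1 t, foldColor n (c (u m)) = m := fun m hm => by
    rw [(hS.leg m hm).2, foldColor_add hm.1]
  have u_mem : ∀ m ∈ Set.Ico 1 t, u m ∈ starSet G v u w t := fun m hm =>
    Or.inr (Or.inl ⟨m, hm, rfl⟩)
  rw [Finset.mem_Icc] at hi
  obtain rfl | hit := hi.2.eq_or_lt
  · refine ⟨v, Set.mem_insert _ _, fold_v, fun j hj hji => ?_⟩
    have hj' : j ∈ Set.Ico 1 i := ⟨(Finset.mem_Icc.1 hj).1, (Finset.mem_Icc.1 hj).2.lt_of_ne hji⟩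
    exact ⟨u j, u_mem j hj', (hS.leg j hj').1, fold_u j hj'⟩
  have hi' : i ∈ Set.Ico 1 t := ⟨hi.1, hit⟩
  refine ⟨u i, u_mem i hi', fold_u i hi', fun j hj hji => ?_⟩
  obtain rfl | hjt := (Finset.mem_Icc.1 hj).2.eq_or_lt
  · exact ⟨v, Set.mem_insert _ _, (hS.leg i hi').1.symm, fold_v⟩
  have hj' : j ∈ Set.Ico 1 t := ⟨(Finset.mem_Icc.1 hj).1, hjt⟩
  by_cases hadj : G.Adj (u j) (u i)
  · exact ⟨u j, u_mem j hj', hadj.symm, fold_u j hj'⟩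
  refine ⟨w i j, Or.inr (Or.inr ⟨i, hi', j, hj', hji, hadj, rfl⟩), (hS.foot i hi' j hj').1, ?_⟩
  rw [(hS.foot i hi' j hj').2, foldColor_of_le (by omega)]

theorem isBColoring_induce_starSet (hS : IsColorStar G c n t v u w)
    (hG : ∀ a b, a ≠ b → ¬G.Adj a b → (G.commonNeighbors a b).Subsingleton)
    (hc : IsProperNat G c) (ht : 1 ≤ t) (htn : t ≤ n + 1) :
    IsBColoring (G.induce (starSet G v u w t)) t fun x => foldColor n (c x) := by
  refine ⟨fun x => hS.foldColor_mem_Icc ht htn x.2,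
    fun x y hxy => hS.foldColor_ne_of_adj hG hc ht htn x.2 y.2 hxy, fun i hi => ?_⟩
  obtain ⟨x, hx, hxi, hdom⟩ := hS.exists_dominating ht htn hi
  refine ⟨⟨x, hx⟩, hxi, fun j hj hji => ?_⟩
  obtain ⟨y, hy, hxy, hyj⟩ := hdom j hj hji
  exact ⟨⟨y, hy⟩, hxy, hyj⟩

end IsColorStar

theorem IsGrundyColoring.exists_isBColoring_induce
    (hG : ∀ a b, a ≠ b → ¬G.Adj a b → (G.commonNeighbors a b).Subsingleton) {k : ℕ}
    {c : V → ℕ} (hc : IsGrundyColoring G k c) (hk : 2 ≤ k) :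
    ∃ (S : Set V) (φ : S → ℕ), IsBColoring (G.induce S) (k / 2) φ := by
  obtain ⟨v, hv⟩ := hc.2.2.1 k (Finset.mem_Icc.2 ⟨by omega, le_rfl⟩)
  have : Nonempty V := ⟨v⟩
  choose! nbr hnbr using hc.2.2.2
  have leg : ∀ m ∈ Set.Ico 1 (k / 2),
      G.Adj v (nbr v (k - k / 2 + m)) ∧ c (nbr v (k - k / 2 + m)) = k - k / 2 + m :=
    fun m ⟨hm1, hm2⟩ => hnbr v _ (by omega) (by omega)
  have hS : IsColorStar G c (k - k / 2) (k / 2) v (fun m => nbr v (k - k / 2 + m))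
      (fun m j => nbr (nbr v (k - k / 2 + m)) j) :=
    ⟨by omega, leg, fun m hm j ⟨hj1, hj2⟩ => hnbr _ j hj1 (by rw [(leg m hm).2]; omega)⟩
  exact ⟨_, _, hS.isBColoring_induce_starSet hG hc.2.1 (by omega) (by omega)⟩

end Coloring

/-- for a b-monotone graph with no induced `K₄ - e` and no induced `C₄`,
`⌊Γ(G)/2⌋ ≤ b(G)`. -/
theorem K4e_C4_free_grundy_le (V : Type*) [Fintype V] (G : SimpleGraph V)
    (hb : BMonotone G) (h1 : IsEmpty (K4minusE ↪g G)) (h2 : IsEmpty (C4 ↪g G)) :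
    grundyNumber G / 2 ≤ bChromatic G := by
  obtain hk | hk := lt_or_ge (grundyNumber G) 2
  · simp [Nat.div_eq_of_lt hk]
  obtain ⟨c, hc⟩ := exists_isGrundyColoring_grundyNumber (G := G) (by omega)
  obtain ⟨S, φ, hφ⟩ := hc.exists_isBColoring_induce
    (fun _ _ => G.commonNeighbors_subsingleton h1 h2) hk
  exact (le_bChromatic hφ).trans (hb S)
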